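/- For every finitely supported permutation w, the Schubert polynomial 𝔖_w has the monomial-positive expansion 𝔖_w = Σ_{(i₁,…,i_k) ∈ Red(w)} (Z∘x_{i_k}∘R_{i_k})∘⋯∘(Z∘x_{i₁}∘R_{i₁}) applied to the constant polynomial 1, where the sum is over all reduced words of w. -/

import Mathlib

/-
Conventions: `Pol = MvPolynomial ℕ ℤ` with the Lean variable `X i` representing
the paper's variable `x_{i+1}` (0-indexed).  All operators carrying a paper index
`i ≥ 1` are represented by Lean operators indexed by `i : ℕ` (Lean `i` ↔ paper `i+1`),
and sequences of positive integers are represented by sequences of natural numbers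
(entry `v` ↔ paper entry `v+1`).
-/

open MvPolynomial
open scoped Classical

abbrev Pol := MvPolynomial ℕ ℤ

noncomputable section

/-- Interchange the variables `x_{i+1}` and `x_{i+2}` (paper indexing). -/
def swapVar (i : ℕ) (f : Pol) : Pol := rename (Equiv.swap i (i+1)) f

/-- Exact division: the unique `g` with `d * g = f` when it exists (`0` otherwise). -/
def exactDiv (d f : Pol) : Pol := if h : ∃ g : Pol, d * g = f then h.choose else 0

/-- The divided difference operator `∂_{i+1}` (paper indexing). -/
def ddiff (i : ℕ) (f : Pol) : Pol := exactDiv (X i - X (i+1)) (f - swapVar i f)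

/-- The Bergeron–Sottile operator `R_{i+1}` (paper indexing): `x_j ↦ x_j` for
`j < i+1`, `x_{i+1} ↦ 0`, `x_j ↦ x_{j-1}` for `j > i+1`. -/
def BS (i : ℕ) : Pol →ₐ[ℤ] Pol :=
  aeval fun j => if j < i then X j else if j = i then 0 else X (j-1)

/-- `m`-fold iterate of `BS i`. -/
def BSit (i m : ℕ) (f : Pol) : Pol := (fun g => BS i g)^[m] f

/-- `Z g = Σ_{k ≥ 0} R₁ᵏ g`. -/
def Zop (f : Pol) : Pol := ∑ᶠ k : ℕ, BSit 0 k f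

/-- `Z^{(m)} g = Σ_{k ≥ 0} R₁^{km} g`. -/
def Zm (m : ℕ) (f : Pol) : Pol := ∑ᶠ k : ℕ, BSit 0 (k * m) f

/-- The truncation operator keeping the first `n` variables: `Π_n` in paper indexing. -/
def truncOp (n : ℕ) : Pol →ₐ[ℤ] Pol := aeval fun j => if j < n then X j else 0

/-- The quasisymmetric divided difference `T_{i+1}` defined as the exact quotient
`((R_{i+2} - R_{i+1})f)/x_{i+1}` (paper indexing). -/
def TqDiv (i : ℕ) (f : Pol) : Pol := exactDiv (X i) (BS (i+1) f - BS i f)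

/-- The quasisymmetric divided difference `T_{i+1} = R_{i+1} ∘ ∂_{i+1}` (paper indexing). -/
def Tq (i : ℕ) (f : Pol) : Pol := BS i (ddiff i f)

/-- The `m`-quasisymmetric divided difference `T^{(m)}_{i+1}` (paper indexing). -/
def Tm (m i : ℕ) (f : Pol) : Pol := exactDiv (X i) (BSit (i+1) m f - BSit i m f)

/-- The slide extractor `D_{i+1} = Π_{i+1} ∘ ∂_{i+1}` (paper indexing). -/
def Dop (i : ℕ) (f : Pol) : Pol := truncOp (i+1) (ddiff i f)

/-- The `m`-slide extractor `D^{(m)}_{i+1} = Π_{i+1} ∘ T^{(m)}_{i+1}` (paper indexing). -/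
def Dm (m i : ℕ) (f : Pol) : Pol := truncOp (i+1) (Tm m i f)

/-- The slide creator `B_{i+1} f = Σ_{k=1}^{i+1} x_k · R_k^{i+1-k}(Π_{i+1} f)` (paper indexing). -/
def Bop (i : ℕ) (f : Pol) : Pol :=
  ∑ k ∈ Finset.range (i+1), X k * BSit k (i - k) (truncOp (i+1) f)

/-- The creation operator `Z ∘ x_{i+1} ∘ R_{i+1}` (paper indexing). -/
def crea (i : ℕ) (f : Pol) : Pol := Zop (X i * BS i f)

/-- A permutation of `{0,1,2,…}` is finitely supported if it fixes all but
finitely many points. -/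
def FinSupp (w : Equiv.Perm ℕ) : Prop := Set.Finite {x | w x ≠ x}

/-- Coxeter length: the minimal `k` such that `w` is a product of `k` simple
transpositions. -/
def len (w : Equiv.Perm ℕ) : ℕ :=
  sInf {k | ∃ l : List ℕ, l.length = k ∧ (l.map fun i => Equiv.swap i (i+1)).prod = w}

/-- The set of reduced words for `w`. -/
def Red (w : Equiv.Perm ℕ) : Set (List ℕ) :=
  {l | l.length = len w ∧ (l.map fun i => Equiv.swap i (i+1)).prod = w}

/-- A family of polynomials indexed by permutations is a family of Schubert
polynomials if: each member is homogeneous of degree the length, the identity is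
sent to `1`, and divided differences act as expected (all this for finitely
supported permutations). -/
def IsSchubertFamily (S : Equiv.Perm ℕ → Pol) : Prop :=
  (∀ w, FinSupp w → (S w).IsHomogeneous (len w)) ∧
  S 1 = 1 ∧
  ∀ w, FinSupp w → ∀ i : ℕ,
    ddiff i (S w) = if w (i+1) < w i then S (w * Equiv.swap i (i+1)) else 0

/-- `b` is a compatible sequence for `a`. -/
def Compat {k : ℕ} (a b : Fin k → ℕ) : Prop :=
  Monotone b ∧ (∀ j, b j ≤ a j) ∧
  ∀ (j : ℕ) (h : j + 1 < k),
    a ⟨j, Nat.lt_of_succ_lt h⟩ < a ⟨j+1, h⟩ → b ⟨j, Nat.lt_of_succ_lt h⟩ < b ⟨j+1, h⟩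

/-- The slide polynomial `𝔉_a`, as the sum of the monomials of all compatible
sequences for `a`. -/
def slide {k : ℕ} (a : Fin k → ℕ) : Pol :=
  ∑ᶠ b ∈ {b : Fin k → ℕ | Compat a b}, ∏ j, X (b j)

/-- `b` is an `m`-compatible sequence for `a` (entrywise congruent mod `m`). -/
def MCompat (m : ℕ) {k : ℕ} (a b : Fin k → ℕ) : Prop :=
  Monotone b ∧ (∀ j, b j ≤ a j ∧ b j % m = a j % m) ∧
  ∀ (j : ℕ) (h : j + 1 < k),
    a ⟨j, Nat.lt_of_succ_lt h⟩ < a ⟨j+1, h⟩ → b ⟨j, Nat.lt_of_succ_lt h⟩ < b ⟨j+1, h⟩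

/-- The `m`-slide polynomial `𝔉ᵐ_a`. -/
def mslide (m : ℕ) {k : ℕ} (a : Fin k → ℕ) : Pol :=
  ∑ᶠ b ∈ {b : Fin k → ℕ | MCompat m a b}, ∏ j, X (b j)

/-- Value of the `m`-slide creator `B^{(m)}_{a+1}` (paper indexing) on the monomial with
exponent vector `d`. -/
def BmMono (m a : ℕ) (d : ℕ →₀ ℕ) : Pol :=
  if ∃ t, a < t ∧ d t ≠ 0 then 0
  else monomial (d.erase a) 1 *
    ∑ r ∈ Finset.range (a+1),
      if r * m ≤ a ∧ ∀ t, t < a → d t ≠ 0 → t < a - r * m then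
        X (a - r * m) ^ (d a + 1) else 0

/-- The `m`-slide creator `B^{(m)}_{a+1}` (paper indexing), extended linearly from
its values on monomials. -/
def Bm (m a : ℕ) (f : Pol) : Pol := ∑ d ∈ f.support, C (f.coeff d) * BmMono m a d

end


/-!
Applying `R_i` to `(x_i - x_{i+1}) ∂_i f = f - s_i f` gives `R_{i+1} f - R_i f = x_i R_i ∂_i f`,
since `R_i` kills `x_i`, sends `x_{i+1}` to `x_i` and satisfies `R_i ∘ s_i = R_{i+1}`. For `f` in
finitely many variables `R_i f = f` for large `i`, so summing telescopes to
`f - R₁ f = ∑ᵢ x_i R_i ∂_i f`; on `Poly⁺` the operator `Z` inverts `1 - R₁`, whence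
`f = ∑ᵢ (Z x_i R_i) (∂_i f)`. For `f = 𝔖_w` this reads
`𝔖_w = ∑_{i ∈ Des w} (Z x_i R_i) 𝔖_{w s_i}`.
The last letter of a reduced word of `w` is exactly a descent `i` of `w`, with the rest a reduced
word of `w s_i`, so induction on `ℓ(w)` gives the expansion.
-/

section DividedDifference

lemma exactDiv_eq_of_mul_eq {d f g : Pol} (hd : d ≠ 0) (h : d * g = f) : exactDiv d f = g := by
  have he : ∃ g : Pol, d * g = f := ⟨g, h⟩
  rw [exactDiv, dif_pos he]
  exact mul_left_cancel₀ hd (he.choose_spec.trans h.symm)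

lemma X_sub_X_succ_ne_zero (i : ℕ) : (X i - X (i + 1) : Pol) ≠ 0 :=
  sub_ne_zero.2 fun h => i.succ_ne_self (X_injective h).symm

lemma X_sub_X_succ_dvd_sub_swapVar (i : ℕ) (f : Pol) : X i - X (i + 1) ∣ f - swapVar i f := by
  rw [← Ideal.mem_span_singleton, ← Ideal.Quotient.eq]
  let q := Ideal.Quotient.mkₐ ℤ (Ideal.span {(X i - X (i + 1) : Pol)})
  have hq : q (X i) = q (X (i + 1)) := Ideal.Quotient.eq.2 (Ideal.mem_span_singleton_self _)
  have hqs : q = q.comp (rename (Equiv.swap i (i + 1))) := by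
    refine algHom_ext fun j => ?_
    rw [AlgHom.comp_apply, rename_X, Equiv.swap_apply_def]
    split_ifs with h1 h2
    · rw [h1, hq]
    · rw [h2, hq]
    · rfl
  exact congrArg (fun φ : Pol →ₐ[ℤ] _ => φ f) hqs

lemma X_sub_X_succ_mul_ddiff (i : ℕ) (f : Pol) :
    (X i - X (i + 1)) * ddiff i f = f - swapVar i f := by
  obtain ⟨g, hg⟩ := X_sub_X_succ_dvd_sub_swapVar i f
  rw [ddiff, exactDiv_eq_of_mul_eq (X_sub_X_succ_ne_zero i) hg.symm, hg]

lemma BS_X_of_lt {i j : ℕ} (h : j < i) : BS i (X j) = X j := by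
  simp [BS, h]

lemma BS_X_self (i : ℕ) : BS i (X i) = 0 := by
  simp [BS]

lemma BS_X_of_gt {i j : ℕ} (h : i < j) : BS i (X j) = X (j - 1) := by
  rw [BS, aeval_X, if_neg (by omega), if_neg (by omega)]

lemma BS_swapVar (i : ℕ) (f : Pol) : BS i (swapVar i f) = BS (i + 1) f := by
  suffices (BS i).comp (rename (Equiv.swap i (i + 1))) = BS (i + 1) from
    congrArg (fun φ : Pol →ₐ[ℤ] Pol => φ f) this
  refine algHom_ext fun j => ?_
  rw [AlgHom.comp_apply, rename_X]
  rcases lt_trichotomy j i with h | rfl | h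
  · rw [Equiv.swap_apply_of_ne_of_ne (by omega) (by omega), BS_X_of_lt h, BS_X_of_lt (by omega)]
  · rw [Equiv.swap_apply_left, BS_X_of_gt (by omega), BS_X_of_lt (by omega), Nat.add_sub_cancel]
  · rcases eq_or_ne j (i + 1) with rfl | h'
    · rw [Equiv.swap_apply_right, BS_X_self, BS_X_self]
    · rw [Equiv.swap_apply_of_ne_of_ne (by omega) h', BS_X_of_gt h, BS_X_of_gt (by omega)]

lemma BS_succ_sub_BS (i : ℕ) (f : Pol) :
    BS (i + 1) f - BS i f = X i * BS i (ddiff i f) := by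
  have h := congrArg (BS i) (X_sub_X_succ_mul_ddiff i f)
  rw [map_mul, map_sub, map_sub, BS_X_self, BS_X_of_gt (by omega : i < i + 1), Nat.add_sub_cancel,
    BS_swapVar] at h
  linear_combination h

end DividedDifference

section Zoperator

lemma exists_mem_supported_Iio (f : Pol) : ∃ N, f ∈ supported ℤ (Set.Iio N) :=
  ⟨f.vars.sup id + 1, supported_mono (fun _ hn => Nat.lt_succ_of_le (Finset.le_sup (f := id) hn))
    (mem_supported_vars f)⟩

lemma constantCoeff_BS (i : ℕ) (f : Pol) : constantCoeff (BS i f) = constantCoeff f := by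
  suffices constantCoeff.comp (BS i : Pol →+* Pol) = constantCoeff from RingHom.congr_fun this f
  refine ringHom_ext (fun r => by simp) fun j => ?_
  simp only [RingHom.comp_apply, AlgHom.coe_toRingHom, BS, aeval_X, constantCoeff_X]
  split_ifs <;> simp

lemma BS_eq_self_of_mem_supported {N r : ℕ} {f : Pol} (hf : f ∈ supported ℤ (Set.Iio N))
    (hr : N ≤ r) : BS r f = f := by
  suffices supported ℤ (Set.Iio N) ≤ (BS r).equalizer (AlgHom.id ℤ Pol) from this hf
  rw [supported_eq_adjoin_X, Algebra.adjoin_le_iff]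
  rintro _ ⟨j, hj, rfl⟩
  exact BS_X_of_lt (lt_of_lt_of_le hj hr)

lemma BS_zero_mem_supported {N : ℕ} {f : Pol} (hf : f ∈ supported ℤ (Set.Iio (N + 1))) :
    BS 0 f ∈ supported ℤ (Set.Iio N) := by
  suffices supported ℤ (Set.Iio (N + 1)) ≤ (supported ℤ (Set.Iio N)).comap (BS 0) from this hf
  rw [supported_eq_adjoin_X, Algebra.adjoin_le_iff]
  rintro _ ⟨_ | j, hj, rfl⟩
  · simp [BS_X_self]
  · simpa [BS_X_of_gt, X_mem_supported] using hj

lemma BSit_eq_pow (i m : ℕ) (f : Pol) : BSit i m f = (BS i ^ m) f := by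
  rw [BSit, AlgHom.coe_pow]

lemma BSit_succ (i m : ℕ) (f : Pol) : BSit i (m + 1) f = BSit i m (BS i f) :=
  Function.iterate_succ_apply _ _ _

lemma BSit_zero_mem_supported {N : ℕ} {f : Pol} (hf : f ∈ supported ℤ (Set.Iio N)) (k : ℕ) :
    BSit 0 k f ∈ supported ℤ (Set.Iio (N - k)) := by
  induction k with
  | zero => exact hf
  | succ k ih =>
    rw [BSit, Function.iterate_succ_apply']
    exact BS_zero_mem_supported (supported_mono (Set.Iio_subset_Iio (by omega)) ih)

lemma constantCoeff_BSit (i k : ℕ) (f : Pol) : constantCoeff (BSit i k f) = constantCoeff f := by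
  induction k generalizing f with
  | zero => rfl
  | succ k ih => rw [BSit_succ, ih, constantCoeff_BS]

lemma BSit_zero_eq_zero {N k : ℕ} {f : Pol} (hf : f ∈ supported ℤ (Set.Iio N))
    (hc : constantCoeff f = 0) (hk : N ≤ k) : BSit 0 k f = 0 := by
  have hmem := BSit_zero_mem_supported hf k
  rw [Nat.sub_eq_zero_of_le hk, show Set.Iio (0 : ℕ) = ∅ by simp, supported_empty,
    Algebra.mem_bot] at hmem
  obtain ⟨c, hc'⟩ := hmem
  have hc0 : c = 0 := by simpa [← hc', hc] using constantCoeff_BSit 0 k f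
  rw [← hc', hc0, map_zero]

lemma support_BSit_zero_finite {f : Pol} (hc : constantCoeff f = 0) :
    (Function.support fun k => BSit 0 k f).Finite := by
  obtain ⟨N, hN⟩ := exists_mem_supported_Iio f
  refine (Set.finite_Iio N).subset fun k hk => ?_
  by_contra h
  exact hk (BSit_zero_eq_zero hN hc (not_lt.1 h))

lemma Zop_zero : Zop 0 = 0 := by
  simp [Zop, BSit_eq_pow]

lemma Zop_add {f g : Pol} (hf : constantCoeff f = 0) (hg : constantCoeff g = 0) :
    Zop (f + g) = Zop f + Zop g := by
  have hadd (k : ℕ) : BSit 0 k (f + g) = BSit 0 k f + BSit 0 k g := by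
    simp only [BSit_eq_pow, map_add]
  simp only [Zop, hadd]
  exact finsum_add_distrib (support_BSit_zero_finite hf) (support_BSit_zero_finite hg)

lemma Zop_sum {ι : Type*} (s : Finset ι) (g : ι → Pol)
    (hg : ∀ i ∈ s, constantCoeff (g i) = 0) :
    Zop (∑ i ∈ s, g i) = ∑ i ∈ s, Zop (g i) := by
  induction s using Finset.induction_on with
  | empty => simp [Zop_zero]
  | insert a s ha ih =>
    simp only [Finset.mem_insert, forall_eq_or_imp] at hg
    have hsum : constantCoeff (∑ i ∈ s, g i) = 0 := by
      rw [map_sum]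
      exact Finset.sum_eq_zero hg.2
    rw [Finset.sum_insert ha, Finset.sum_insert ha, Zop_add hg.1 hsum, ih hg.2]

lemma Zop_sub_BS_zero {f : Pol} (hc : constantCoeff f = 0) : Zop (f - BS 0 f) = f := by
  obtain ⟨N, hN⟩ := exists_mem_supported_Iio f
  have hterm (k : ℕ) : BSit 0 k (f - BS 0 f) = BSit 0 k f - BSit 0 (k + 1) f := by
    rw [BSit_succ, BSit_eq_pow, BSit_eq_pow, BSit_eq_pow, map_sub]
  have hsupp : (Function.support fun k => BSit 0 k (f - BS 0 f)) ⊆ Finset.range N :=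
    fun k hk => Finset.mem_range.2 <| not_le.1 fun h => hk <| by
      dsimp only
      rw [hterm, BSit_zero_eq_zero hN hc h, BSit_zero_eq_zero hN hc (by omega), sub_zero]
  rw [Zop, finsum_eq_sum_of_support_subset _ hsupp, Finset.sum_congr rfl fun k _ => hterm k,
    Finset.sum_range_sub', BSit_zero_eq_zero hN hc le_rfl, sub_zero]
  rfl

lemma crea_add (j : ℕ) (f g : Pol) : crea j (f + g) = crea j f + crea j g := by
  simp only [crea, map_add, mul_add]
  exact Zop_add (by simp) (by simp)

lemma crea_zero (j : ℕ) : crea j 0 = 0 := by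
  rw [crea, map_zero, mul_zero, Zop_zero]

lemma crea_finsum_mem {ι : Type*} (j : ℕ) {s : Set ι} (hs : s.Finite) (g : ι → Pol) :
    crea j (∑ᶠ i ∈ s, g i) = ∑ᶠ i ∈ s, crea j (g i) :=
  (AddMonoidHom.mk' (crea j) (crea_add j)).map_finsum_mem g hs

lemma sub_BS_zero_eq_sum {M : ℕ} {f : Pol} (hf : f ∈ supported ℤ (Set.Iio M)) :
    f - BS 0 f = ∑ r ∈ Finset.range M, X r * BS r (ddiff r f) := by
  simp only [← BS_succ_sub_BS]
  rw [Finset.sum_range_sub (fun r => BS r f), BS_eq_self_of_mem_supported hf le_rfl]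

lemma eq_sum_crea_ddiff {M : ℕ} {f : Pol} (hf : f ∈ supported ℤ (Set.Iio M))
    (hc : constantCoeff f = 0) : f = ∑ r ∈ Finset.range M, crea r (ddiff r f) :=
  calc f = Zop (f - BS 0 f) := (Zop_sub_BS_zero hc).symm
    _ = _ := by rw [sub_BS_zero_eq_sum hf, Zop_sum _ _ fun r _ => by simp]; rfl

end Zoperator

section Permutations

abbrev adjSwap (i : ℕ) : Equiv.Perm ℕ := Equiv.swap i (i + 1)

def descentSet (w : Equiv.Perm ℕ) : Set ℕ := {j | w (j + 1) < w j}

def inversionSet (w : Equiv.Perm ℕ) : Set (ℕ × ℕ) := {p | p.1 < p.2 ∧ w p.2 < w p.1}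

variable {w : Equiv.Perm ℕ}

lemma FinSupp.exists_bound (hw : FinSupp w) : ∃ N, ∀ x, N ≤ x → w x = x := by
  obtain ⟨b, hb⟩ := hw.bddAbove
  exact ⟨b + 1, fun x hx => by_contra fun h => absurd (hb h) (by omega)⟩

lemma FinSupp.mul_adjSwap (hw : FinSupp w) (j : ℕ) : FinSupp (w * adjSwap j) := by
  refine (hw.union (Set.finite_Icc j (j + 1))).subset fun x hx => ?_
  by_cases hxj : x = j ∨ x = j + 1
  · exact Or.inr (by rcases hxj with rfl | rfl <;> simp)
  · rw [not_or] at hxj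
    exact Or.inl (by simpa [Equiv.swap_apply_of_ne_of_ne hxj.1 hxj.2] using hx)

lemma FinSupp.list_prod_map_adjSwap (l : List ℕ) : FinSupp (l.map adjSwap).prod := by
  induction l using List.reverseRecOn with
  | nil => simp [FinSupp]
  | append_singleton l j ih => simpa using ih.mul_adjSwap j

lemma descentSet_subset_Iio {N : ℕ} (hN : ∀ x, N ≤ x → w x = x) :
    descentSet w ⊆ Set.Iio N := by
  intro j (hj : w (j + 1) < w j)
  by_contra h
  rw [hN j (not_lt.1 h), hN (j + 1) (by simp at h; omega)] at hj
  omega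

lemma FinSupp.descentSet_finite (hw : FinSupp w) : (descentSet w).Finite :=
  (Set.finite_Iio _).subset (descentSet_subset_Iio hw.exists_bound.choose_spec)

lemma FinSupp.inversionSet_finite (hw : FinSupp w) : (inversionSet w).Finite := by
  obtain ⟨N, hN⟩ := hw.exists_bound
  have hlt {a : ℕ} (ha : a < N) : w a < N := by
    by_contra h
    have := w.injective (hN _ (not_lt.1 h))
    omega
  refine ((Set.finite_Iio N).prod (Set.finite_Iio N)).subset
    fun ⟨a, b⟩ ⟨(hab : a < b), (hwab : w b < w a)⟩ => ?_
  have hb : b < N := by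
    by_contra hb
    rw [hN b (not_lt.1 hb)] at hwab
    have ha : ¬a < N := fun ha => absurd (hlt ha) (by omega)
    rw [hN a (not_lt.1 ha)] at hwab
    omega
  exact ⟨hab.trans hb, hb⟩

lemma eq_one_of_descentSet_eq_empty (h : descentSet w = ∅) : w = 1 := by
  have hmono : StrictMono w := strictMono_nat_of_lt_succ fun n =>
    lt_of_le_of_ne (not_lt.1 fun hn => h.subset hn) (w.injective.ne (by omega))
  ext x
  exact DFunLike.congr_fun
    (Subsingleton.elim (hmono.orderIsoOfSurjective w w.surjective) (OrderIso.refl ℕ)) x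

lemma descentSet_nonempty (hw : w ≠ 1) : (descentSet w).Nonempty :=
  Set.nonempty_iff_ne_empty.2 fun h => hw (eq_one_of_descentSet_eq_empty h)

lemma mem_descentSet_mul_adjSwap_iff {j : ℕ} :
    j ∈ descentSet (w * adjSwap j) ↔ j ∉ descentSet w := by
  simp only [descentSet, Set.mem_ofPred_eq, Equiv.Perm.mul_apply, Equiv.swap_apply_left,
    Equiv.swap_apply_right, not_lt]
  exact ⟨le_of_lt, fun h => lt_of_le_of_ne h (w.injective.ne (by omega))⟩

lemma inversionSet_one : inversionSet 1 = ∅ :=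
  Set.eq_empty_of_forall_notMem fun _ hp => absurd hp.2 (not_lt.2 hp.1.le)

lemma inversionSet_mul_adjSwap_diff (w : Equiv.Perm ℕ) (j : ℕ) :
    inversionSet (w * adjSwap j) \ {(j, j + 1)} =
      (adjSwap j).prodCongr (adjSwap j) ⁻¹' (inversionSet w \ {(j, j + 1)}) := by
  ext ⟨a, b⟩
  simp only [inversionSet, Set.mem_sdiff, Set.mem_ofPred_eq, Set.mem_singleton_iff,
    Set.mem_preimage, Equiv.prodCongr_apply, Prod.map_apply, Prod.mk.injEq, Equiv.Perm.mul_apply]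
  simp only [adjSwap, Equiv.swap_apply_def]
  split_ifs <;> omega

lemma ncard_inversionSet_mul_adjSwap_of_mem (hw : FinSupp w) {j : ℕ} (hj : j ∈ descentSet w) :
    (inversionSet (w * adjSwap j)).ncard + 1 = (inversionSet w).ncard := by
  have hnot : (j, j + 1) ∉ inversionSet (w * adjSwap j) := fun h =>
    mem_descentSet_mul_adjSwap_iff.1 h.2 hj
  have hmem : (j, j + 1) ∈ inversionSet w := ⟨by omega, hj⟩
  let σ := (adjSwap j).prodCongr (adjSwap j)
  rw [← Set.ncard_sdiff_singleton_add_one hmem hw.inversionSet_finite,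
    ← Set.sdiff_singleton_eq_self hnot, inversionSet_mul_adjSwap_diff,
    Set.ncard_preimage_of_injective_subset_range σ.injective (by simp [σ.range_eq_univ])]

lemma ncard_inversionSet_mul_adjSwap_of_notMem (hw : FinSupp w) {j : ℕ}
    (hj : j ∉ descentSet w) :
    (inversionSet (w * adjSwap j)).ncard = (inversionSet w).ncard + 1 := by
  have := ncard_inversionSet_mul_adjSwap_of_mem (hw.mul_adjSwap j)
    (mem_descentSet_mul_adjSwap_iff.2 hj)
  rwa [Equiv.mul_swap_mul_self, eq_comm] at this

lemma ncard_inversionSet_list_prod_le (l : List ℕ) :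
    (inversionSet (l.map adjSwap).prod).ncard ≤ l.length := by
  induction l using List.reverseRecOn with
  | nil => simp [inversionSet_one]
  | append_singleton l j ih =>
    have hv := FinSupp.list_prod_map_adjSwap l
    simp only [List.map_append, List.map_singleton, List.prod_append, List.prod_singleton,
      List.length_append, List.length_singleton]
    by_cases hj : j ∈ descentSet (l.map adjSwap).prod
    · have := ncard_inversionSet_mul_adjSwap_of_mem hv hj
      omega
    · rw [ncard_inversionSet_mul_adjSwap_of_notMem hv hj]
      omega

lemma exists_list_prod_eq_of_ncard_inversionSet (n : ℕ) (hw : FinSupp w)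
    (hn : (inversionSet w).ncard = n) :
    ∃ l : List ℕ, l.length = n ∧ (l.map adjSwap).prod = w := by
  induction n generalizing w with
  | zero =>
    have hempty := (Set.ncard_eq_zero hw.inversionSet_finite).1 hn
    refine ⟨[], rfl, (eq_one_of_descentSet_eq_empty ?_).symm⟩
    refine Set.eq_empty_of_forall_notMem fun j hj => ?_
    simpa [hempty] using (show (j, j + 1) ∈ inversionSet w from ⟨by omega, hj⟩)
  | succ n ih =>
    have hne : w ≠ 1 := by rintro rfl; simp [inversionSet_one] at hn
    obtain ⟨j, hj⟩ := descentSet_nonempty hne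
    have := ncard_inversionSet_mul_adjSwap_of_mem hw hj
    obtain ⟨l, hl, hprod⟩ := ih (hw.mul_adjSwap j) (by omega)
    refine ⟨l ++ [j], by simp [hl], ?_⟩
    simp [hprod]

lemma len_eq_ncard_inversionSet (hw : FinSupp w) : len w = (inversionSet w).ncard := by
  obtain ⟨l, hl, hprod⟩ := exists_list_prod_eq_of_ncard_inversionSet _ hw rfl
  refine le_antisymm (Nat.sInf_le ⟨l, hl, hprod⟩) (le_csInf ⟨l.length, l, rfl, hprod⟩ ?_)
  rintro _ ⟨l', rfl, rfl⟩
  exact ncard_inversionSet_list_prod_le l'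

lemma len_mul_adjSwap_of_mem (hw : FinSupp w) {j : ℕ} (hj : j ∈ descentSet w) :
    len (w * adjSwap j) + 1 = len w := by
  rw [len_eq_ncard_inversionSet hw, len_eq_ncard_inversionSet (hw.mul_adjSwap j)]
  exact ncard_inversionSet_mul_adjSwap_of_mem hw hj

lemma len_mul_adjSwap_of_notMem (hw : FinSupp w) {j : ℕ} (hj : j ∉ descentSet w) :
    len (w * adjSwap j) = len w + 1 := by
  rw [len_eq_ncard_inversionSet hw, len_eq_ncard_inversionSet (hw.mul_adjSwap j)]
  exact ncard_inversionSet_mul_adjSwap_of_notMem hw hj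

lemma len_one : len 1 = 0 :=
  Nat.eq_zero_of_le_zero (Nat.sInf_le ⟨[], rfl, rfl⟩)

lemma len_eq_zero_iff (hw : FinSupp w) : len w = 0 ↔ w = 1 := by
  refine ⟨fun h => by_contra fun hne => ?_, fun h => h ▸ len_one⟩
  obtain ⟨j, hj⟩ := descentSet_nonempty hne
  have := len_mul_adjSwap_of_mem hw hj
  omega

end Permutations

section ReducedWords

variable {w : Equiv.Perm ℕ}

lemma Red_one : Red 1 = {[]} := by
  ext l
  simp only [Red, len_one, List.length_eq_zero_iff, Set.mem_ofPred_eq, Set.mem_singleton_iff,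
    and_iff_left_iff_imp]
  rintro rfl
  rfl

lemma Red_eq_biUnion (hw : FinSupp w) (hne : w ≠ 1) :
    Red w = ⋃ j ∈ descentSet w, (· ++ [j]) '' Red (w * adjSwap j) := by
  ext l
  simp only [Set.mem_iUnion, Set.mem_image, exists_prop]
  constructor
  · rintro ⟨hlen, hprod⟩
    have hl : l ≠ [] := by
      rintro rfl
      exact hne ((len_eq_zero_iff hw).1 hlen.symm)
    obtain ⟨l', j, rfl⟩ := (List.eq_nil_or_concat l).resolve_left hl
    simp only [List.concat_eq_append, List.length_append, List.length_singleton] at hlen hprod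
    have hprod' : (l'.map adjSwap).prod = w * adjSwap j := by
      rw [← hprod]
      simp
    have hle : len (w * adjSwap j) ≤ l'.length := Nat.sInf_le ⟨l', rfl, hprod'⟩
    have hj : j ∈ descentSet w := by
      by_contra hj
      have := len_mul_adjSwap_of_notMem hw hj
      omega
    have := len_mul_adjSwap_of_mem hw hj
    exact ⟨j, hj, l', ⟨by omega, hprod'⟩, List.concat_eq_append.symm⟩
  · rintro ⟨j, hj, l', ⟨hlen, hprod⟩, rfl⟩
    have := len_mul_adjSwap_of_mem hw hj
    exact ⟨by simp; omega, by simp [hprod]⟩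

lemma FinSupp.Red_finite (hw : FinSupp w) : (Red w).Finite := by
  obtain ⟨n, hn⟩ : ∃ n, len w = n := ⟨_, rfl⟩
  induction n generalizing w with
  | zero =>
    rw [(len_eq_zero_iff hw).1 hn, Red_one]
    exact Set.finite_singleton _
  | succ n ih =>
    have hne : w ≠ 1 := mt (len_eq_zero_iff hw).2 (by omega)
    rw [Red_eq_biUnion hw hne]
    refine hw.descentSet_finite.biUnion fun j hj => (ih (hw.mul_adjSwap j) ?_).image _
    have := len_mul_adjSwap_of_mem hw hj
    omega

lemma finsum_mem_Red (hw : FinSupp w) (hne : w ≠ 1) {M : Type*} [AddCommMonoid M]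
    (G : List ℕ → M) :
    ∑ᶠ l ∈ Red w, G l =
      ∑ᶠ j ∈ descentSet w, ∑ᶠ l ∈ Red (w * adjSwap j), G (l ++ [j]) := by
  rw [Red_eq_biUnion hw hne, finsum_mem_biUnion _ hw.descentSet_finite
    fun j _ => (hw.mul_adjSwap j).Red_finite.image _]
  · exact finsum_mem_congr rfl fun j _ => finsum_mem_image fun _ _ _ _ => List.append_cancel_right
  · intro j _ k _ hjk
    refine Set.disjoint_left.2 ?_
    rintro _ ⟨l₁, -, rfl⟩ ⟨l₂, -, h⟩
    exact hjk (by simpa using (congrArg List.getLast? h).symm)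

end ReducedWords

section Schubert

variable {S : Equiv.Perm ℕ → Pol} {w : Equiv.Perm ℕ}

lemma IsSchubertFamily.constantCoeff_eq_zero (hS : IsSchubertFamily S) (hw : FinSupp w)
    (hne : w ≠ 1) : constantCoeff (S w) = 0 := by
  rw [constantCoeff_eq]
  exact (hS.1 w hw).coeff_eq_zero fun h => hne ((len_eq_zero_iff hw).1 (by simpa using h.symm))

lemma IsSchubertFamily.eq_finsum_crea (hS : IsSchubertFamily S) (hw : FinSupp w) (hne : w ≠ 1) :
    S w = ∑ᶠ j ∈ descentSet w, crea j (S (w * adjSwap j)) := by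
  obtain ⟨N, hN⟩ := hw.exists_bound
  obtain ⟨M, hM⟩ := exists_mem_supported_Iio (S w)
  have hdesc : descentSet w ⊆ Set.Iio (max N M) :=
    (descentSet_subset_Iio hN).trans (Set.Iio_subset_Iio (le_max_left _ _))
  rw [eq_sum_crea_ddiff (supported_mono (Set.Iio_subset_Iio (le_max_right N M)) hM)
    (hS.constantCoeff_eq_zero hw hne)]
  simp only [hS.2.2 w hw, apply_ite (crea _), crea_zero]
  rw [← Finset.sum_filter]
  refine (finsum_mem_eq_sum_of_subset _ (fun j hj => ?_) fun j hj => ?_).symm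
  · exact Finset.mem_filter.2 ⟨Finset.mem_range.2 (hdesc hj.1), hj.1⟩
  · exact (Finset.mem_filter.1 hj).2

end Schubert

/-- the monomial-positive expansion of a Schubert polynomial via the
creation operators `Z∘x_i∘R_i`, summed over reduced words. -/
theorem stmt_3 (S : Equiv.Perm ℕ → Pol) (hS : IsSchubertFamily S)
    (w : Equiv.Perm ℕ) (hw : FinSupp w) :
    S w = ∑ᶠ l ∈ Red w, l.foldl (fun g i => crea i g) 1 := by
  obtain ⟨n, hn⟩ : ∃ n, len w = n := ⟨_, rfl⟩
  induction n generalizing w with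
  | zero =>
    rw [(len_eq_zero_iff hw).1 hn, Red_one, finsum_mem_singleton]
    exact hS.2.1
  | succ n ih =>
    have hne : w ≠ 1 := mt (len_eq_zero_iff hw).2 (by omega)
    rw [hS.eq_finsum_crea hw hne, finsum_mem_Red hw hne]
    refine finsum_mem_congr rfl fun j hj => ?_
    have hlen := len_mul_adjSwap_of_mem hw hj
    rw [ih _ (hw.mul_adjSwap j) (by omega), crea_finsum_mem j (hw.mul_adjSwap j).Red_finite]
    simp only [List.foldl_append, List.foldl_cons, List.foldl_nil]
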